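/- arXiv:1312.7704 — 4 statements merged into one kernel-verified Lean document; each statement's English description precedes it below -/
import Mathlib

section
/- Let λ₁, λ₂ ∈ ℝ with λ₁² + λ₂² ≤ 2(λ₁−λ₂)², let δ ∈ (0,1], and let Q_δ = [[λ₁²+λ₂²+2δ², −(λ₁+λ₂)], [−(λ₁+λ₂), 2]]. Then for every V = (V₁,V₂) ∈ ℂ², (Q_δ V, V) ≥ (1/8) ((λ₁²+λ₂²+2δ²)|V₁|² + 2|V₂|²). -/
/-!
Since `4 λ₁ λ₂ ≤ λ₁² + λ₂²`, one has `(λ₁ + λ₂)² ≤ (3/2)(λ₁² + λ₂²)`, i.e.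
`det Q_δ ≥ (1/4) q₁₁ q₂₂`. For a Hermitian 2×2 matrix with `det Q ≥ c q₁₁ q₂₂`, the matrix
`Q - (c/2) diag Q` still has nonnegative diagonal and determinant
`(1 - c/2)² q₁₁ q₂₂ - |q₁₂|² ≥ (c²/4) q₁₁ q₂₂ ≥ 0`, so `Q ≥ (c/2) diag Q`; here `c = 1/4`.
-/

open Matrix

/-- The 2×2 quasi-symmetriser Q_δ(λ₁,λ₂), as a complex matrix. -/
noncomputable def Qd (l1 l2 δ : ℝ) : Matrix (Fin 2) (Fin 2) ℂ :=
  !![((l1^2 + l2^2 + 2*δ^2 : ℝ) : ℂ), ((-(l1+l2) : ℝ) : ℂ);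
     ((-(l1+l2) : ℝ) : ℂ), (2 : ℂ)]

/-- The 2×2 companion (Sylvester) matrix with eigenvalues λ₁, λ₂. -/
noncomputable def Amat (l1 l2 : ℝ) : Matrix (Fin 2) (Fin 2) ℂ :=
  !![(0 : ℂ), (1 : ℂ); ((-(l1*l2) : ℝ) : ℂ), ((l1+l2 : ℝ) : ℂ)]

lemma re_star_dotProduct_mulVec_fin_two (a d : ℝ) (b : ℂ) (V : Fin 2 → ℂ) :
    (star V ⬝ᵥ (!![(a : ℂ), b; star b, (d : ℂ)] *ᵥ V)).re =
      a * ‖V 0‖ ^ 2 + d * ‖V 1‖ ^ 2 + 2 * (star (V 0) * b * V 1).re := by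
  simp only [dotProduct, mulVec, Fin.sum_univ_two, cons_val', cons_val_zero, cons_val_one,
    empty_val', cons_val_fin_one, of_apply, Pi.star_apply, Complex.sq_norm,
    Complex.normSq_apply, Complex.star_def, Complex.add_re, Complex.add_im, Complex.mul_re,
    Complex.mul_im, Complex.conj_re, Complex.conj_im, Complex.ofReal_re, Complex.ofReal_im]
  ring

lemma abs_re_star_mul_mul_le (x b y : ℂ) : |(star x * b * y).re| ≤ ‖b‖ * (‖x‖ * ‖y‖) :=
  (Complex.abs_re_le_norm _).trans_eq <| by
    rw [norm_mul, norm_mul, norm_star]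
    ring

lemma add_two_mul_re_star_mul_mul_nonneg {a d : ℝ} {b : ℂ} (ha : 0 ≤ a) (hd : 0 ≤ d)
    (hb : ‖b‖ ^ 2 ≤ a * d) (x y : ℂ) :
    0 ≤ a * ‖x‖ ^ 2 + d * ‖y‖ ^ 2 + 2 * (star x * b * y).re := by
  have hsq : (‖b‖ * (‖x‖ * ‖y‖)) ^ 2 ≤ ((a * ‖x‖ ^ 2 + d * ‖y‖ ^ 2) / 2) ^ 2 :=
    calc (‖b‖ * (‖x‖ * ‖y‖)) ^ 2 = ‖b‖ ^ 2 * (‖x‖ ^ 2 * ‖y‖ ^ 2) := by ring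
      _ ≤ a * d * (‖x‖ ^ 2 * ‖y‖ ^ 2) := by gcongr
      _ ≤ ((a * ‖x‖ ^ 2 + d * ‖y‖ ^ 2) / 2) ^ 2 := by
        nlinarith [sq_nonneg (a * ‖x‖ ^ 2 - d * ‖y‖ ^ 2)]
  have hcross := (abs_re_star_mul_mul_le x b y).trans (le_of_sq_le_sq hsq (by positivity))
  linarith [(abs_le.mp hcross).1]

theorem half_mul_diag_le_re_star_dotProduct_mulVec_fin_two {a d c : ℝ} {b : ℂ}
    (ha : 0 ≤ a) (hd : 0 ≤ d) (hc : c ≤ 2) (hdet : c * a * d ≤ a * d - ‖b‖ ^ 2)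
    (V : Fin 2 → ℂ) :
    c / 2 * (a * ‖V 0‖ ^ 2 + d * ‖V 1‖ ^ 2) ≤
      (star V ⬝ᵥ (!![(a : ℂ), b; star b, (d : ℂ)] *ᵥ V)).re := by
  have hk : 0 ≤ 1 - c / 2 := by linarith
  have hb : ‖b‖ ^ 2 ≤ ((1 - c / 2) * a) * ((1 - c / 2) * d) := by
    nlinarith [mul_nonneg (sq_nonneg c) (mul_nonneg ha hd)]
  have hshifted :=
    add_two_mul_re_star_mul_mul_nonneg (mul_nonneg hk ha) (mul_nonneg hk hd) hb (V 0) (V 1)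
  rw [re_star_dotProduct_mulVec_fin_two]
  linarith

theorem stmt_8_general (l1 l2 δ : ℝ) (hcond : l1^2 + l2^2 ≤ 2*(l1 - l2)^2)
    (V : Fin 2 → ℂ) :
    (1/8) * ((l1^2 + l2^2 + 2*δ^2) * ‖V 0‖^2 + 2*‖V 1‖^2) ≤
      (dotProduct (star V) ((Qd l1 l2 δ).mulVec V)).re := by
  have hQ : Qd l1 l2 δ = !![((l1^2 + l2^2 + 2*δ^2 : ℝ) : ℂ), ((-(l1+l2) : ℝ) : ℂ);
      star ((-(l1+l2) : ℝ) : ℂ), ((2 : ℝ) : ℂ)] := by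
    simp [Qd]
  have hdet : 1 / 4 * (l1^2 + l2^2 + 2*δ^2) * 2 ≤
      (l1^2 + l2^2 + 2*δ^2) * 2 - ‖((-(l1+l2) : ℝ) : ℂ)‖ ^ 2 := by
    rw [Complex.norm_real, Real.norm_eq_abs, sq_abs]
    nlinarith [sq_nonneg δ]
  have hnear := half_mul_diag_le_re_star_dotProduct_mulVec_fin_two (by positivity)
    zero_le_two (by norm_num) hdet V
  rw [hQ]
  linarith

theorem stmt_8 (l1 l2 δ : ℝ) (hcond : l1^2 + l2^2 ≤ 2*(l1 - l2)^2)
    (hδ : δ ∈ Set.Ioc (0:ℝ) 1) (V : Fin 2 → ℂ) :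
    (1/8) * ((l1^2 + l2^2 + 2*δ^2) * ‖V 0‖^2 + 2*‖V 1‖^2) ≤
      (dotProduct (star V) ((Qd l1 l2 δ).mulVec V)).re :=
  stmt_8_general l1 l2 δ hcond V
end

section
/- Let λ₁, λ₂ ∈ ℝ, δ ∈ (0,1], with |λᵢ| ≤ K for i = 1,2 and some K > 0. Let Q_δ = [[λ₁²+λ₂²+2δ², −(λ₁+λ₂)], [−(λ₁+λ₂), 2]]. Then there exists C₂ > 0 depending only on K such that C₂^{-1} δ² |V|² ≤ (Q_δ V, V) ≤ C₂ |V|² for all V ∈ ℂ². -/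
/-!
The form is a sum of squares, `(Q_δ V, V) = |λ₁V₁ - V₂|² + |λ₂V₁ - V₂|² + 2δ²|V₁|²`.
Each of the first two squares is at most `2K²|V₁|² + 2|V₂|²`, which gives the upper bound.
Conversely `|V₂|² ≤ 2|λ₁V₁ - V₂|² + 2K²|V₁|²`, so, as `δ ≤ 1`,
`δ²|V|² ≤ 2|λ₁V₁ - V₂|² + (2K² + 1)δ²|V₁|²`, and `C₂ = 4(K² + 1)` serves for both bounds.
-/

open Matrix

lemma re_star_dotProduct_Qd_mulVec (l1 l2 δ : ℝ) (V : Fin 2 → ℂ) :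
    (star V ⬝ᵥ Qd l1 l2 δ *ᵥ V).re =
      ‖(l1 : ℂ) * V 0 - V 1‖ ^ 2 + ‖(l2 : ℂ) * V 0 - V 1‖ ^ 2 + 2 * δ ^ 2 * ‖V 0‖ ^ 2 := by
  simp only [Complex.sq_norm, Complex.normSq_apply]
  simp only [dotProduct, Pi.star_apply, RCLike.star_def, mulVec, Qd, Complex.ofReal_add,
    Complex.ofReal_mul, Complex.ofReal_ofNat, neg_add_rev, Complex.ofReal_neg, of_apply, cons_val',
    cons_val_fin_one, Fin.sum_univ_two, Fin.isValue, cons_val_zero, cons_val_one, Complex.add_re,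
    Complex.mul_re, Complex.conj_re, Complex.ofReal_re, Complex.re_ofNat, Complex.im_ofNat,
    Complex.ofReal_im, mul_zero, sub_zero, Complex.add_im, add_zero, Complex.mul_im, zero_mul,
    Complex.neg_re, Complex.neg_im, neg_zero, Complex.conj_im, neg_mul, sub_neg_eq_add,
    Complex.sub_re, Complex.sub_im]
  ring

section NormBounds

variable {R : Type*} [SeminormedRing R] {c : R} {K : ℝ}

lemma norm_mul_le_of_norm_le (hc : ‖c‖ ≤ K) (x : R) : ‖c * x‖ ≤ K * ‖x‖ :=
  (norm_mul_le c x).trans (by gcongr)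

lemma sq_norm_mul_sub_le (hc : ‖c‖ ≤ K) (x y : R) :
    ‖c * x - y‖ ^ 2 ≤ 2 * K ^ 2 * ‖x‖ ^ 2 + 2 * ‖y‖ ^ 2 :=
  calc ‖c * x - y‖ ^ 2 ≤ (K * ‖x‖ + ‖y‖) ^ 2 := by
        gcongr
        exact (norm_sub_le _ _).trans (by gcongr; exact norm_mul_le_of_norm_le hc x)
    _ ≤ 2 * ((K * ‖x‖) ^ 2 + ‖y‖ ^ 2) := add_sq_le
    _ = 2 * K ^ 2 * ‖x‖ ^ 2 + 2 * ‖y‖ ^ 2 := by ring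

lemma sq_norm_le_of_norm_le (hc : ‖c‖ ≤ K) (x y : R) :
    ‖y‖ ^ 2 ≤ 2 * ‖c * x - y‖ ^ 2 + 2 * K ^ 2 * ‖x‖ ^ 2 :=
  calc ‖y‖ ^ 2 ≤ (‖c * x - y‖ + K * ‖x‖) ^ 2 := by
        gcongr
        calc ‖y‖ = ‖c * x - y - c * x‖ := by rw [sub_sub_cancel_left, norm_neg]
          _ ≤ ‖c * x - y‖ + ‖c * x‖ := norm_sub_le _ _
          _ ≤ ‖c * x - y‖ + K * ‖x‖ := by gcongr; exact norm_mul_le_of_norm_le hc x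
    _ ≤ 2 * (‖c * x - y‖ ^ 2 + (K * ‖x‖) ^ 2) := add_sq_le
    _ = 2 * ‖c * x - y‖ ^ 2 + 2 * K ^ 2 * ‖x‖ ^ 2 := by ring

end NormBounds

theorem stmt_10_general (K : ℝ) :
    ∃ C2 : ℝ, 0 < C2 ∧ ∀ l1 l2 : ℝ, |l1| ≤ K → |l2| ≤ K →
      ∀ δ ∈ Set.Ioc (0:ℝ) 1, ∀ V : Fin 2 → ℂ,
        C2⁻¹ * δ^2 * (‖V 0‖^2 + ‖V 1‖^2) ≤
          (dotProduct (star V) ((Qd l1 l2 δ).mulVec V)).re ∧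
        (dotProduct (star V) ((Qd l1 l2 δ).mulVec V)).re ≤
          C2 * (‖V 0‖^2 + ‖V 1‖^2) := by
  refine ⟨4 * (K ^ 2 + 1), by positivity, fun l1 l2 h1 h2 δ ⟨hδ0, hδ1⟩ V => ?_⟩
  have hδ : δ ^ 2 ≤ 1 := pow_le_one₀ hδ0.le hδ1
  have hl1 : ‖(l1 : ℂ)‖ ≤ K := by rwa [Complex.norm_real, Real.norm_eq_abs]
  have hl2 : ‖(l2 : ℂ)‖ ≤ K := by rwa [Complex.norm_real, Real.norm_eq_abs]
  rw [re_star_dotProduct_Qd_mulVec]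
  constructor
  · rw [inv_mul_eq_div, div_mul_eq_mul_div, div_le_iff₀ (by positivity)]
    have hV1 := mul_le_mul_of_nonneg_left (sq_norm_le_of_norm_le hl1 (V 0) (V 1)) (sq_nonneg δ)
    nlinarith [sq_nonneg K, sq_nonneg ‖V 0‖, sq_nonneg ‖(l1 : ℂ) * V 0 - V 1‖,
      sq_nonneg ‖(l2 : ℂ) * V 0 - V 1‖, mul_nonneg (sq_nonneg δ) (sq_nonneg ‖V 0‖)]
  · nlinarith [sq_norm_mul_sub_le hl1 (V 0) (V 1), sq_norm_mul_sub_le hl2 (V 0) (V 1),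
      mul_le_mul_of_nonneg_right hδ (sq_nonneg ‖V 0‖), sq_nonneg K, sq_nonneg ‖V 0‖]

theorem stmt_10 (K : ℝ) (hK : 0 < K) :
    ∃ C2 : ℝ, 0 < C2 ∧ ∀ l1 l2 : ℝ, |l1| ≤ K → |l2| ≤ K →
      ∀ δ ∈ Set.Ioc (0:ℝ) 1, ∀ V : Fin 2 → ℂ,
        C2⁻¹ * δ^2 * (‖V 0‖^2 + ‖V 1‖^2) ≤
          (dotProduct (star V) ((Qd l1 l2 δ).mulVec V)).re ∧
        (dotProduct (star V) ((Qd l1 l2 δ).mulVec V)).re ≤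
          C2 * (‖V 0‖^2 + ‖V 1‖^2) :=
  stmt_10_general K
end

section
/- Let λ₁, λ₂ ∈ ℝ, δ ∈ (0,1], Q_δ = [[λ₁²+λ₂²+2δ², −(λ₁+λ₂)], [−(λ₁+λ₂), 2]], and let A = [[0, 1], [−λ₁λ₂, λ₁+λ₂]] be the companion (Sylvester) matrix with eigenvalues λ₁, λ₂. Then Q_δ A − A* Q_δ = [[0, 2δ²], [−2δ², 0]], and hence |((Q_δ A − A* Q_δ) V, V)| = 4δ² |Im(V̄₁ V₂)| ≤ 2δ (δ²|V₁|² + |V₂|²) for all V ∈ ℂ². -/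
open Matrix

open ComplexConjugate

theorem Qd_mul_Amat_sub_conjTranspose_mul (l1 l2 δ : ℝ) :
    Qd l1 l2 δ * Amat l1 l2 - (Amat l1 l2)ᴴ * Qd l1 l2 δ =
      !![(0 : ℂ), ((2*δ^2 : ℝ) : ℂ); ((-(2*δ^2) : ℝ) : ℂ), (0 : ℂ)] := by
  ext i j
  fin_cases i <;> fin_cases j <;>
    simp [Qd, Amat, Matrix.mul_apply, Fin.sum_univ_succ, conjTranspose_apply] <;> ring

theorem norm_star_dotProduct_skew_mulVec (c : ℝ) (V : Fin 2 → ℂ) :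
    ‖star V ⬝ᵥ (!![(0 : ℂ), (c : ℂ); ((-c : ℝ) : ℂ), (0 : ℂ)] *ᵥ V)‖ =
      2 * |c| * |(conj (V 0) * V 1).im| := by
  have hform : star V ⬝ᵥ (!![(0 : ℂ), (c : ℂ); ((-c : ℝ) : ℂ), (0 : ℂ)] *ᵥ V) =
      c * (conj (V 0) * V 1 - conj (conj (V 0) * V 1)) := by
    simp [dotProduct, Matrix.mulVec, Fin.sum_univ_succ, mul_comm]
    ring
  rw [hform, Complex.sub_conj]
  simp only [norm_mul, Complex.norm_real, Complex.norm_I, Real.norm_eq_abs]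
  ring

theorem two_mul_abs_im_conj_mul_le (δ : ℝ) (z w : ℂ) :
    2 * δ * |(conj z * w).im| ≤ δ^2 * ‖z‖^2 + ‖w‖^2 := by
  have him : |(conj z * w).im| ≤ ‖z‖ * ‖w‖ := by
    simpa using Complex.abs_im_le_norm (conj z * w)
  calc 2 * δ * |(conj z * w).im| ≤ 2 * |δ| * (‖z‖ * ‖w‖) := by
        gcongr
        · exact le_abs_self δ
    _ ≤ δ^2 * ‖z‖^2 + ‖w‖^2 := by
        nlinarith [sq_nonneg (|δ| * ‖z‖ - ‖w‖), sq_abs δ]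

theorem stmt_11 (l1 l2 δ : ℝ) (hδ : δ ∈ Set.Ioc (0:ℝ) 1) :
    Qd l1 l2 δ * Amat l1 l2 - (Amat l1 l2)ᴴ * Qd l1 l2 δ =
      !![(0 : ℂ), ((2*δ^2 : ℝ) : ℂ); ((-(2*δ^2) : ℝ) : ℂ), (0 : ℂ)] ∧
    ∀ V : Fin 2 → ℂ,
      ‖dotProduct (star V)
        ((Qd l1 l2 δ * Amat l1 l2 - (Amat l1 l2)ᴴ * Qd l1 l2 δ).mulVec V)‖ =
        4*δ^2 * |((starRingEnd ℂ) (V 0) * V 1).im| ∧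
      4*δ^2 * |((starRingEnd ℂ) (V 0) * V 1).im| ≤ 2*δ * (δ^2*‖V 0‖^2 + ‖V 1‖^2) := by
  have hcomm := Qd_mul_Amat_sub_conjTranspose_mul l1 l2 δ
  refine ⟨hcomm, fun V => ⟨?_, ?_⟩⟩
  · rw [hcomm, norm_star_dotProduct_skew_mulVec, abs_of_nonneg (by positivity)]
    ring
  · calc 4*δ^2 * |(conj (V 0) * V 1).im| = 2*δ * (2*δ * |(conj (V 0) * V 1).im|) := by ring
      _ ≤ 2*δ * (δ^2*‖V 0‖^2 + ‖V 1‖^2) := by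
        gcongr
        · linarith [hδ.1]
        · exact two_mul_abs_im_conj_mul_le δ (V 0) (V 1)
end

section
/- Under the assumptions λ₁² + λ₂² ≤ 2(λ₁−λ₂)² and |λᵢ| ≤ K, with Q_δ and A = [[0,1],[−λ₁λ₂, λ₁+λ₂]] as above, there is a constant C (depending only on K) such that |((Q_δ A − A* Q_δ) V, V)| ≤ C δ (Q_δ V, V) for all V ∈ ℂ² and δ ∈ (0,1]. -/
open Matrix

/-!
The commutator `Q_δ A − A* Q_δ` is the skew matrix with off-diagonal entries `±2δ²`, so its
quadratic form is at most `4δ²|V₀||V₁| ≤ 2δ(δ²|V₀|² + |V₁|²)`, which is at most `δ` times the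
diagonal part `(λ₁² + λ₂² + 2δ²)|V₀|² + 2|V₁|²` of `(Q_δ V, V)`. The condition
`λ₁² + λ₂² ≤ 2(λ₁ − λ₂)²` gives `2(λ₁ + λ₂)² ≤ 3(λ₁² + λ₂²)`, which keeps the off-diagonal entries
of `Q_δ` small enough that `(Q_δ V, V)` is at least `1/8` of its diagonal part. Hence `C = 8`.
-/

open ComplexConjugate

theorem abs_re_conj_mul_le (z w : ℂ) : |(conj z * w).re| ≤ ‖z‖ * ‖w‖ :=
  (Complex.abs_re_le_norm _).trans_eq (by rw [norm_mul, Complex.norm_conj])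

theorem norm_star_dotProduct_skew_mulVec_le (c : ℂ) (V : Fin 2 → ℂ) :
    ‖star V ⬝ᵥ (!![0, c; -c, 0] *ᵥ V)‖ ≤ 2 * ‖c‖ * (‖V 0‖ * ‖V 1‖) := by
  have hform : star V ⬝ᵥ (!![0, c; -c, 0] *ᵥ V)
      = c * (conj (V 0) * V 1) - c * (conj (V 1) * V 0) := by
    simp only [dotProduct, Pi.star_apply, RCLike.star_def, mulVec, of_apply, cons_val',
      cons_val_fin_one, Fin.sum_univ_two, cons_val_zero, cons_val_one]
    ring
  rw [hform]
  calc _ ≤ ‖c * (conj (V 0) * V 1)‖ + ‖c * (conj (V 1) * V 0)‖ := norm_sub_le _ _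
    _ = 2 * ‖c‖ * (‖V 0‖ * ‖V 1‖) := by
      simp only [norm_mul, Complex.norm_conj]
      ring

theorem re_star_dotProduct_symm_mulVec (a b d : ℝ) (V : Fin 2 → ℂ) :
    (star V ⬝ᵥ (!![(a : ℂ), b; b, d] *ᵥ V)).re
      = a * ‖V 0‖ ^ 2 + d * ‖V 1‖ ^ 2 + 2 * b * (conj (V 0) * V 1).re := by
  simp only [dotProduct, Pi.star_apply, RCLike.star_def, mulVec, of_apply, cons_val',
    cons_val_fin_one, Fin.sum_univ_two, cons_val_zero, cons_val_one, Complex.add_re,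
    Complex.add_im, Complex.mul_re, Complex.mul_im, Complex.conj_re, Complex.conj_im,
    Complex.ofReal_re, Complex.ofReal_im, Complex.sq_norm, Complex.normSq_apply]
  ring

theorem Qd_mul_Amat_sub_conjTranspose_mul_Qd (l1 l2 δ : ℝ) :
    Qd l1 l2 δ * Amat l1 l2 - (Amat l1 l2)ᴴ * Qd l1 l2 δ
      = !![0, 2 * (δ : ℂ) ^ 2; -(2 * (δ : ℂ) ^ 2), 0] := by
  ext i j
  fin_cases i <;> fin_cases j <;>
    simp [Qd, Amat, mul_apply, Fin.sum_univ_two, conjTranspose_apply] <;> ring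

theorem Qd_eq_ofReal (l1 l2 δ : ℝ) :
    Qd l1 l2 δ = !![((l1 ^ 2 + l2 ^ 2 + 2 * δ ^ 2 : ℝ) : ℂ), ((-(l1 + l2) : ℝ) : ℂ);
      ((-(l1 + l2) : ℝ) : ℂ), ((2 : ℝ) : ℂ)] := by
  rw [Qd, Complex.ofReal_ofNat]

theorem two_mul_sq_add_le_three_mul_sq_add_sq {l1 l2 : ℝ}
    (h : l1 ^ 2 + l2 ^ 2 ≤ 2 * (l1 - l2) ^ 2) :
    2 * (l1 + l2) ^ 2 ≤ 3 * (l1 ^ 2 + l2 ^ 2) := by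
  nlinarith

theorem four_mul_sq_mul_le_mul_diag {δ s x y : ℝ} (hδ : 0 ≤ δ) (hs : 0 ≤ s) :
    4 * δ ^ 2 * (x * y) ≤ δ * ((s + 2 * δ ^ 2) * x ^ 2 + 2 * y ^ 2) := by
  nlinarith [mul_nonneg hδ (sq_nonneg (δ * x - y)), mul_nonneg hδ (mul_nonneg hs (sq_nonneg x))]

theorem diag_le_eight_mul_form_of_two_mul_sq_le {a b r x y : ℝ} (hb : 2 * b ^ 2 ≤ 3 * a)
    (hr : |r| ≤ x * y) :
    a * x ^ 2 + 2 * y ^ 2 ≤ 8 * (a * x ^ 2 + 2 * y ^ 2 + 2 * b * r) := by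
  have hbr : -(|b| * (x * y)) ≤ b * r :=
    calc -(|b| * (x * y))
        ≤ -(|b| * |r|) := neg_le_neg (mul_le_mul_of_nonneg_left hr (abs_nonneg b))
      _ = -|b * r| := by rw [abs_mul]
      _ ≤ b * r := neg_abs_le _
  -- `7/4 (7/8 (a x² + 2 y²) - 2|b| x y) = (7/4 y - |b| x)² + (49/32 a - b²) x²`
  nlinarith [sq_nonneg (7 * y - 4 * |b| * x), sq_abs b, mul_nonneg (sub_nonneg.2 hb) (sq_nonneg x)]

theorem stmt_12_general (K : ℝ) :
    ∃ C : ℝ, 0 < C ∧ ∀ l1 l2 : ℝ, |l1| ≤ K → |l2| ≤ K →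
      l1^2 + l2^2 ≤ 2*(l1 - l2)^2 →
      ∀ δ ∈ Set.Ioc (0:ℝ) 1, ∀ V : Fin 2 → ℂ,
        ‖dotProduct (star V)
          ((Qd l1 l2 δ * Amat l1 l2 - (Amat l1 l2)ᴴ * Qd l1 l2 δ).mulVec V)‖ ≤
          C * δ * (dotProduct (star V) ((Qd l1 l2 δ).mulVec V)).re := by
  refine ⟨8, by norm_num, fun l1 l2 _ _ hl δ hδ V => ?_⟩
  have hδ0 : 0 ≤ δ := hδ.1.le
  have hcomm : ‖star V ⬝ᵥ (!![0, 2 * (δ : ℂ) ^ 2; -(2 * (δ : ℂ) ^ 2), 0] *ᵥ V)‖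
      ≤ 4 * δ ^ 2 * (‖V 0‖ * ‖V 1‖) :=
    (norm_star_dotProduct_skew_mulVec_le _ V).trans_eq (by
      rw [norm_mul, norm_pow, Complex.norm_real, Real.norm_of_nonneg hδ0, Complex.norm_ofNat]
      ring)
  have hdiag := four_mul_sq_mul_le_mul_diag (x := ‖V 0‖) (y := ‖V 1‖) hδ0
    (add_nonneg (sq_nonneg l1) (sq_nonneg l2))
  have hnear := diag_le_eight_mul_form_of_two_mul_sq_le (x := ‖V 0‖) (y := ‖V 1‖)
    (a := l1 ^ 2 + l2 ^ 2 + 2 * δ ^ 2) (b := -(l1 + l2))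
    (by linarith [neg_sq (l1 + l2), two_mul_sq_add_le_three_mul_sq_add_sq hl, sq_nonneg δ])
    (abs_re_conj_mul_le _ _)
  rw [Qd_mul_Amat_sub_conjTranspose_mul_Qd, Qd_eq_ofReal, re_star_dotProduct_symm_mulVec]
  exact hcomm.trans <| hdiag.trans <| (mul_le_mul_of_nonneg_left hnear hδ0).trans_eq (by ring)

theorem stmt_12 (K : ℝ) (hK : 0 < K) :
    ∃ C : ℝ, 0 < C ∧ ∀ l1 l2 : ℝ, |l1| ≤ K → |l2| ≤ K →
      l1^2 + l2^2 ≤ 2*(l1 - l2)^2 →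
      ∀ δ ∈ Set.Ioc (0:ℝ) 1, ∀ V : Fin 2 → ℂ,
        ‖dotProduct (star V)
          ((Qd l1 l2 δ * Amat l1 l2 - (Amat l1 l2)ᴴ * Qd l1 l2 δ).mulVec V)‖ ≤
          C * δ * (dotProduct (star V) ((Qd l1 l2 δ).mulVec V)).re :=
  stmt_12_general K
end
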